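/- Every binary orchard network is tree-based. -/

import Mathlib

open Classical

variable {A : Type} [DecidableEq A]

/-- The vertex set of a digraph given by a finite set of arcs. -/
def verts (E : Finset (A × A)) : Finset A :=
  E.image Prod.fst ∪ E.image Prod.snd

/-- Outdegree of `a` in the arc set `E`. -/
def odeg (E : Finset (A × A)) (a : A) : ℕ := (E.filter fun p => p.1 = a).card

/-- Indegree of `a` in the arc set `E`. -/
def ideg (E : Finset (A × A)) (a : A) : ℕ := (E.filter fun p => p.2 = a).card

/-- The arc relation of `E`. -/
def Arc (E : Finset (A × A)) (a b : A) : Prop := (a, b) ∈ E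

/-- `a` is a leaf of `E`: indegree `1` and outdegree `0`. -/
def IsLeafV (E : Finset (A × A)) (a : A) : Prop :=
  a ∈ verts E ∧ ideg E a = 1 ∧ odeg E a = 0

/-- A directed binary phylogenetic network (leaves labelled by themselves):
an acyclic digraph with a unique root of indegree `0` and outdegree `2`, in which
every other vertex is a leaf (indegree `1`, outdegree `0`), a tree vertex
(indegree `1`, outdegree `2`) or a reticulation (indegree `2`, outdegree `1`). -/
def IsDirBinNet (E : Finset (A × A)) : Prop :=
  (∀ a : A, ¬ Relation.TransGen (Arc E) a a) ∧
  (∃! r : A, r ∈ verts E ∧ ideg E r = 0) ∧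
  (∀ a ∈ verts E,
      (ideg E a = 0 ∧ odeg E a = 2) ∨ (ideg E a = 1 ∧ odeg E a = 0) ∨
      (ideg E a = 1 ∧ odeg E a = 2) ∨ (ideg E a = 2 ∧ odeg E a = 1))

/-- Picking a cherry `{x,y}`: delete the leaf `y` and suppress its parent `p`
(with grandparent `g`). -/
def PickCherry (E E' : Finset (A × A)) : Prop :=
  ∃ x y p g : A, x ≠ y ∧ IsLeafV E x ∧ IsLeafV E y ∧
    (p, x) ∈ E ∧ (p, y) ∈ E ∧ (g, p) ∈ E ∧
    E' = insert (g, x) (((E.erase (p, x)).erase (p, y)).erase (g, p))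

/-- Picking a reticulated cherry on leaves `x, y`: the parent `v` of `x` is a
reticulation, the parent `u` of `y` is a tree vertex with arc `(u,v)`; delete the
arc `(u,v)` and suppress `u` and `v` (with `g` the parent of `u` and `w` the
other parent of `v`). -/
def PickRetCherry (E E' : Finset (A × A)) : Prop :=
  ∃ x y u v g w : A, IsLeafV E x ∧ IsLeafV E y ∧
    (v, x) ∈ E ∧ (u, y) ∈ E ∧ (u, v) ∈ E ∧ (w, v) ∈ E ∧ w ≠ u ∧ (g, u) ∈ E ∧
    ideg E v = 2 ∧ odeg E v = 1 ∧ ideg E u = 1 ∧ odeg E u = 2 ∧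
    E' = insert (w, x) (insert (g, y)
      (((((E.erase (u, v)).erase (w, v)).erase (v, x)).erase (g, u)).erase (u, y)))

/-- One picking step: a cherry or a reticulated cherry is picked. -/
def PickStep (E E' : Finset (A × A)) : Prop := PickCherry E E' ∨ PickRetCherry E E'

/-- A single cherry: a root with exactly two leaf children. -/
def IsSingleCherry (E : Finset (A × A)) : Prop :=
  ∃ r x y : A, r ≠ x ∧ r ≠ y ∧ x ≠ y ∧ E = {(r, x), (r, y)}

/-- An orchard network: reducible to a single cherry by picking cherries and
reticulated cherries. -/
def IsOrchard (E : Finset (A × A)) : Prop :=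
  ∃ F : Finset (A × A), Relation.ReflTransGen PickStep E F ∧ IsSingleCherry F

/-- A tree-based network: it has a rooted spanning tree (an arborescence on all
vertices, contained in the arc set) whose leaves are leaves of the network. -/
def IsTreeBased (E : Finset (A × A)) : Prop :=
  ∃ S : Finset (A × A), S ⊆ E ∧ verts S = verts E ∧
    (∃ r ∈ verts E, ideg S r = 0 ∧
      (∀ a ∈ verts E, a ≠ r → ideg S a = 1) ∧
      ∀ a ∈ verts E, Relation.ReflTransGen (Arc S) r a) ∧
    (∀ a ∈ verts E, odeg S a = 0 → odeg E a = 0)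

/-! Picking a cherry or a reticulated cherry is undone by subdividing the one or two arcs that
now enter its leaves and adding an arc out of a subdivision vertex: to a new leaf for a cherry,
to the other subdivision vertex for a reticulated cherry. These reversals keep the degrees of
the old vertices and turn old arcs into paths, so picking maps networks to networks.
Tree-basedness lifts back through them: an arc entering a leaf lies in every support tree, so
the support tree can be subdivided along with the network; a new leaf extends it; and a new arc
leaving a vertex that is not a leaf of the support tree needs no change. Induction along the
picking sequence, starting from a single cherry, proves the theorem. -/

section Degrees

variable {E F : Finset (A × A)} {a b c d : A}

lemma mem_verts : a ∈ verts E ↔ (∃ b, (a, b) ∈ E) ∨ ∃ b, (b, a) ∈ E := by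
  simp [verts]

lemma mem_verts_of_mem_left (h : (a, b) ∈ E) : a ∈ verts E := mem_verts.2 (.inl ⟨b, h⟩)

lemma mem_verts_of_mem_right (h : (a, b) ∈ E) : b ∈ verts E := mem_verts.2 (.inr ⟨a, h⟩)

lemma verts_mono (h : E ⊆ F) : verts E ⊆ verts F :=
  Finset.union_subset_union (Finset.image_subset_image h) (Finset.image_subset_image h)

lemma verts_insert : verts (insert (a, b) E) = insert a (insert b (verts E)) := by
  ext z
  simp only [verts, Finset.image_insert, Finset.mem_union, Finset.mem_insert]
  tauto

lemma verts_insert_of_mem (ha : a ∈ verts E) (hb : b ∈ verts E) :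
    verts (insert (a, b) E) = verts E := by
  rw [verts_insert, Finset.insert_eq_of_mem hb, Finset.insert_eq_of_mem ha]

lemma ideg_eq_zero_iff : ideg E a = 0 ↔ ∀ c, (c, a) ∉ E := by
  simp only [ideg, Finset.card_eq_zero, Finset.filter_eq_empty_iff, Prod.forall]
  exact ⟨fun h c hc => h c a hc rfl, fun h c d hc hd => h c (hd ▸ hc)⟩

lemma odeg_eq_zero_iff : odeg E a = 0 ↔ ∀ c, (a, c) ∉ E := by
  simp only [odeg, Finset.card_eq_zero, Finset.filter_eq_empty_iff, Prod.forall]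
  exact ⟨fun h c hc => h a c hc rfl, fun h c d hc hd => h d (hd ▸ hc)⟩

lemma ideg_ne_zero (h : (b, a) ∈ E) : ideg E a ≠ 0 := fun h0 => ideg_eq_zero_iff.1 h0 b h

lemma odeg_ne_zero (h : (a, b) ∈ E) : odeg E a ≠ 0 := fun h0 => odeg_eq_zero_iff.1 h0 b h

lemma ideg_eq_zero_of_notMem (h : a ∉ verts E) : ideg E a = 0 :=
  ideg_eq_zero_iff.2 fun _ hc => h (mem_verts_of_mem_right hc)

lemma odeg_eq_zero_of_notMem (h : a ∉ verts E) : odeg E a = 0 :=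
  odeg_eq_zero_iff.2 fun _ hc => h (mem_verts_of_mem_left hc)

lemma eq_of_ideg_eq_one (h : ideg E a = 1) (hb : (b, a) ∈ E) (hc : (c, a) ∈ E) : c = b := by
  have := Finset.card_le_one.1 h.le (c, a) (by simp [hc]) (b, a) (by simp [hb])
  simpa using this

lemma eq_of_odeg_eq_one (h : odeg E a = 1) (hb : (a, b) ∈ E) (hc : (a, c) ∈ E) : c = b := by
  have := Finset.card_le_one.1 h.le (a, c) (by simp [hc]) (a, b) (by simp [hb])
  simpa using this

lemma one_lt_odeg (hbc : b ≠ c) (hb : (a, b) ∈ E) (hc : (a, c) ∈ E) : 1 < odeg E a :=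
  Finset.one_lt_card.2 ⟨(a, b), by simp [hb], (a, c), by simp [hc], by simpa using hbc⟩

lemma eq_or_eq_of_ideg_eq_two (h : ideg E a = 2) (hbc : b ≠ c) (hb : (b, a) ∈ E)
    (hc : (c, a) ∈ E) (hd : (d, a) ∈ E) : d = b ∨ d = c := by
  by_contra! hne
  have : 2 < ideg E a := Finset.two_lt_card.2 ⟨(b, a), by simp [hb], (c, a), by simp [hc],
    (d, a), by simp [hd], by simpa using hbc, by simpa using hne.1.symm,
    by simpa using hne.2.symm⟩
  omega

lemma eq_or_eq_of_odeg_eq_two (h : odeg E a = 2) (hbc : b ≠ c) (hb : (a, b) ∈ E)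
    (hc : (a, c) ∈ E) (hd : (a, d) ∈ E) : d = b ∨ d = c := by
  by_contra! hne
  have : 2 < odeg E a := Finset.two_lt_card.2 ⟨(a, b), by simp [hb], (a, c), by simp [hc],
    (a, d), by simp [hd], by simpa using hbc, by simpa using hne.1.symm,
    by simpa using hne.2.symm⟩
  omega

lemma ideg_insert_of_ne (h : b ≠ c) : ideg (insert (a, b) E) c = ideg E c := by
  simp [ideg, Finset.filter_insert, h]

lemma odeg_insert_of_ne (h : a ≠ c) : odeg (insert (a, b) E) c = odeg E c := by
  simp [odeg, Finset.filter_insert, h]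

lemma ideg_insert_self (h : (a, b) ∉ E) : ideg (insert (a, b) E) b = ideg E b + 1 := by
  simp [ideg, Finset.filter_insert, h]

lemma odeg_insert_self (h : (a, b) ∉ E) : odeg (insert (a, b) E) a = odeg E a + 1 := by
  simp [odeg, Finset.filter_insert, h]

lemma ideg_erase_of_ne (h : b ≠ c) : ideg (E.erase (a, b)) c = ideg E c := by
  simp [ideg, Finset.filter_erase, h]

lemma odeg_erase_of_ne (h : a ≠ c) : odeg (E.erase (a, b)) c = odeg E c := by
  simp [odeg, Finset.filter_erase, h]

lemma ideg_erase_self (h : (a, b) ∈ E) : ideg (E.erase (a, b)) b + 1 = ideg E b := by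
  rw [ideg, Finset.filter_erase]
  exact Finset.card_erase_add_one (by simp [h])

lemma odeg_erase_self (h : (a, b) ∈ E) : odeg (E.erase (a, b)) a + 1 = odeg E a := by
  rw [odeg, Finset.filter_erase]
  exact Finset.card_erase_add_one (by simp [h])

end Degrees

def subdivide (E : Finset (A × A)) (a b m : A) : Finset (A × A) :=
  insert (a, m) (insert (m, b) (E.erase (a, b)))

section Subdivide

variable {E F : Finset (A × A)} {a b c d m z : A}

lemma mem_subdivide :
    (c, d) ∈ subdivide E a b m ↔
      (c, d) = (a, m) ∨ (c, d) = (m, b) ∨ (c, d) ≠ (a, b) ∧ (c, d) ∈ E := by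
  simp only [subdivide, Finset.mem_insert, Finset.mem_erase]

lemma mem_subdivide_of_ne (h : (c, d) ∈ E) (hne : (c, d) ≠ (a, b)) : (c, d) ∈ subdivide E a b m :=
  mem_subdivide.2 (.inr (.inr ⟨hne, h⟩))

lemma subdivide_mono (h : E ⊆ F) : subdivide E a b m ⊆ subdivide F a b m :=
  Finset.insert_subset_insert _ (Finset.insert_subset_insert _ (Finset.erase_subset_erase _ h))

lemma Arc.transGen_subdivide (h : Arc E c d) : Relation.TransGen (Arc (subdivide E a b m)) c d := by
  by_cases hcd : (c, d) = (a, b)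
  · obtain ⟨rfl, rfl⟩ := Prod.mk.inj hcd
    exact .head (mem_subdivide.2 (.inl rfl)) (.single (mem_subdivide.2 (.inr (.inl rfl))))
  · exact .single (mem_subdivide_of_ne h hcd)

lemma reflTransGen_arc_subdivide (h : Relation.ReflTransGen (Arc E) c d) :
    Relation.ReflTransGen (Arc (subdivide E a b m)) c d :=
  Relation.reflTransGen_closed (fun _ _ h => h.transGen_subdivide.to_reflTransGen) _ _ h

lemma verts_subdivide (hab : (a, b) ∈ E) : verts (subdivide E a b m) = insert m (verts E) := by
  conv_rhs => rw [← Finset.insert_erase hab]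
  simp only [subdivide, verts_insert]
  ext
  simp only [Finset.mem_insert]
  tauto

lemma notMem_verts_subdivide (hab : (a, b) ∈ E) (hz : z ∉ verts E) (hzm : z ≠ m) :
    z ∉ verts (subdivide E a b m) := by
  rw [verts_subdivide hab, Finset.mem_insert, not_or]
  exact ⟨hzm, hz⟩

lemma mk_notMem_insert_erase (hab : (a, b) ∈ E) (hm : m ∉ verts E) :
    (a, m) ∉ insert (m, b) (E.erase (a, b)) := by
  simp only [Finset.mem_insert, Prod.mk.injEq, Finset.mem_erase]
  exact fun h => hm (h.elim (fun h => h.1 ▸ mem_verts_of_mem_left hab)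
    fun h => mem_verts_of_mem_right h.2)

lemma ideg_subdivide_of_ne (hab : (a, b) ∈ E) (hm : m ∉ verts E) (hz : z ≠ m) :
    ideg (subdivide E a b m) z = ideg E z := by
  have hmb : (m, b) ∉ E.erase (a, b) := fun h =>
    hm (mem_verts_of_mem_left (Finset.mem_of_mem_erase h))
  rw [subdivide, ideg_insert_of_ne hz.symm]
  rcases eq_or_ne b z with rfl | hbz
  · rw [ideg_insert_self hmb, ideg_erase_self hab]
  · rw [ideg_insert_of_ne hbz, ideg_erase_of_ne hbz]

lemma odeg_subdivide_of_ne (hab : (a, b) ∈ E) (hm : m ∉ verts E) (hz : z ≠ m) :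
    odeg (subdivide E a b m) z = odeg E z := by
  rcases eq_or_ne a z with rfl | haz
  · rw [subdivide, odeg_insert_self (mk_notMem_insert_erase hab hm), odeg_insert_of_ne hz.symm,
      odeg_erase_self hab]
  · rw [subdivide, odeg_insert_of_ne haz, odeg_insert_of_ne hz.symm, odeg_erase_of_ne haz]

lemma ideg_subdivide_self (hab : (a, b) ∈ E) (hm : m ∉ verts E) :
    ideg (subdivide E a b m) m = 1 := by
  have hbm : b ≠ m := fun h => hm (h ▸ mem_verts_of_mem_right hab)
  rw [subdivide, ideg_insert_self (mk_notMem_insert_erase hab hm), ideg_insert_of_ne hbm,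
    ideg_eq_zero_of_notMem fun h => hm (verts_mono (Finset.erase_subset _ _) h)]

end Subdivide

structure IsSupportTree (E S : Finset (A × A)) (r : A) : Prop where
  subset : S ⊆ E
  verts_eq : verts S = verts E
  root_mem : r ∈ verts E
  ideg_root : ideg S r = 0
  ideg_of_ne_root : ∀ a ∈ verts E, a ≠ r → ideg S a = 1
  reachable : ∀ a ∈ verts E, Relation.ReflTransGen (Arc S) r a
  odeg_eq_zero : ∀ a ∈ verts E, odeg S a = 0 → odeg E a = 0

lemma isTreeBased_iff {E : Finset (A × A)} : IsTreeBased E ↔ ∃ S r, IsSupportTree E S r := by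
  constructor
  · rintro ⟨S, h₁, h₂, ⟨r, h₃, h₄, h₅, h₆⟩, h₇⟩
    exact ⟨S, r, h₁, h₂, h₃, h₄, h₅, h₆, h₇⟩
  · rintro ⟨S, r, h₁, h₂, h₃, h₄, h₅, h₆, h₇⟩
    exact ⟨S, h₁, h₂, ⟨r, h₃, h₄, h₅, h₆⟩, h₇⟩

namespace IsSupportTree

variable {E S : Finset (A × A)} {r a b g x m u v y : A}

lemma mem_of_isLeafV (hT : IsSupportTree E S r) (hgx : (g, x) ∈ E) (hx : IsLeafV E x) :
    (g, x) ∈ S := by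
  obtain ⟨-, hx, hxo⟩ := hx
  -- the root reaches `g`, but a childless vertex reaches only itself
  have hxr : x ≠ r := by
    rintro rfl
    have hgx' : g = x := (Relation.reflTransGen_iff_eq fun c hc =>
      odeg_eq_zero_iff.1 hxo c (hT.subset hc)).1 (hT.reachable g (mem_verts_of_mem_left hgx))
    exact odeg_ne_zero (hgx' ▸ hgx) hxo
  have hxS := hT.ideg_of_ne_root x (mem_verts_of_mem_right hgx) hxr
  obtain ⟨c, hc⟩ : ∃ c, (c, x) ∈ S := by
    by_contra! h
    exact absurd (ideg_eq_zero_iff.2 h) (by omega)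
  rwa [eq_of_ideg_eq_one hx hgx (hT.subset hc)] at hc

lemma subdivide (hT : IsSupportTree E S r) (hab : (a, b) ∈ S) (hm : m ∉ verts E) :
    IsSupportTree (subdivide E a b m) (subdivide S a b m) r := by
  have habE := hT.subset hab
  have hmS : m ∉ verts S := hT.verts_eq ▸ hm
  have hverts := verts_subdivide (m := m) habE
  refine ⟨subdivide_mono hT.subset, ?_, ?_, ?_, ?_, ?_, ?_⟩
  · rw [verts_subdivide hab, hverts, hT.verts_eq]
  · exact hverts ▸ Finset.mem_insert_of_mem hT.root_mem
  · rw [ideg_subdivide_of_ne hab hmS (ne_of_mem_of_not_mem hT.root_mem hm), hT.ideg_root]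
  · intro z hz hzr
    rcases Finset.mem_insert.1 (hverts ▸ hz) with rfl | hz
    · exact ideg_subdivide_self hab hmS
    · rw [ideg_subdivide_of_ne hab hmS (ne_of_mem_of_not_mem hz hm)]
      exact hT.ideg_of_ne_root z hz hzr
  · intro z hz
    rcases Finset.mem_insert.1 (hverts ▸ hz) with rfl | hz
    · exact (reflTransGen_arc_subdivide (hT.reachable a (mem_verts_of_mem_left habE))).tail
        (mem_subdivide.2 (.inl rfl))
    · exact reflTransGen_arc_subdivide (hT.reachable z hz)
  · intro z hz h0
    rcases Finset.mem_insert.1 (hverts ▸ hz) with rfl | hz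
    · exact absurd h0 (odeg_ne_zero (mem_subdivide.2 (.inr (.inl rfl))))
    · have hzm := ne_of_mem_of_not_mem hz hm
      rw [odeg_subdivide_of_ne hab hmS hzm] at h0
      rw [odeg_subdivide_of_ne habE hm hzm, hT.odeg_eq_zero z hz h0]

lemma insert_leaf (hT : IsSupportTree E S r) (hm : m ∈ verts E) (hy : y ∉ verts E) :
    IsSupportTree (insert (m, y) E) (insert (m, y) S) r := by
  have hverts : verts (insert (m, y) E) = insert y (verts E) := by
    rw [verts_insert, Finset.insert_eq_of_mem (Finset.mem_insert_of_mem hm)]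
  have hyS : y ∉ verts S := hT.verts_eq ▸ hy
  have lift : ∀ z ∈ verts E, Relation.ReflTransGen (Arc (insert (m, y) S)) r z := fun z hz =>
    Relation.ReflTransGen.mono (fun _ _ h => Finset.mem_insert_of_mem h) _ _ (hT.reachable z hz)
  refine ⟨Finset.insert_subset_insert _ hT.subset, ?_, ?_, ?_, ?_, ?_, ?_⟩
  · rw [verts_insert, verts_insert, hT.verts_eq]
  · exact hverts ▸ Finset.mem_insert_of_mem hT.root_mem
  · rw [ideg_insert_of_ne (ne_of_mem_of_not_mem hT.root_mem hy).symm, hT.ideg_root]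
  · intro z hz hzr
    rcases Finset.mem_insert.1 (hverts ▸ hz) with rfl | hz
    · rw [ideg_insert_self fun h => hyS (mem_verts_of_mem_right h), ideg_eq_zero_of_notMem hyS]
    · rw [ideg_insert_of_ne (ne_of_mem_of_not_mem hz hy).symm]
      exact hT.ideg_of_ne_root z hz hzr
  · intro z hz
    rcases Finset.mem_insert.1 (hverts ▸ hz) with rfl | hz
    · exact (lift m hm).tail (Finset.mem_insert_self _ _)
    · exact lift z hz
  · intro z hz h0
    have hmz : m ≠ z := by
      rintro rfl
      exact odeg_ne_zero (Finset.mem_insert_self _ _) h0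
    rw [odeg_insert_of_ne hmz] at h0 ⊢
    rcases Finset.mem_insert.1 (hverts ▸ hz) with rfl | hz
    · exact odeg_eq_zero_of_notMem hy
    · exact hT.odeg_eq_zero z hz h0

lemma insert_arc (hT : IsSupportTree E S r) (hu : (u, a) ∈ S) (hv : v ∈ verts E) :
    IsSupportTree (insert (u, v) E) S r := by
  have hverts : verts (insert (u, v) E) = verts E :=
    verts_insert_of_mem (mem_verts_of_mem_left (hT.subset hu)) hv
  refine ⟨hT.subset.trans (Finset.subset_insert _ _), hverts ▸ hT.verts_eq,
    hverts ▸ hT.root_mem, hT.ideg_root, hverts ▸ hT.ideg_of_ne_root, hverts ▸ hT.reachable, ?_⟩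
  intro z hz h0
  have huz : u ≠ z := fun h => odeg_ne_zero (h ▸ hu) h0
  rw [odeg_insert_of_ne huz]
  exact hT.odeg_eq_zero z (hverts ▸ hz) h0

end IsSupportTree

lemma isSupportTree_singleton {r y : A} (h : r ≠ y) : IsSupportTree {(r, y)} {(r, y)} r := by
  have hverts : ∀ z, z ∈ verts {(r, y)} ↔ z = r ∨ z = y := by simp [verts]
  refine ⟨subset_rfl, rfl, (hverts r).2 (.inl rfl), ?_, ?_, ?_, fun _ _ h => h⟩
  · simp [ideg, Finset.filter_singleton, h.symm]
  · intro z hz hzr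
    obtain rfl := ((hverts z).1 hz).resolve_left hzr
    simp [ideg, Finset.filter_singleton]
  · intro z hz
    rcases (hverts z).1 hz with rfl | rfl
    · rfl
    · exact .single (Finset.mem_singleton_self _)

lemma IsSingleCherry.isTreeBased {F : Finset (A × A)} (h : IsSingleCherry F) : IsTreeBased F := by
  obtain ⟨r, x, y, hrx, hry, hxy, rfl⟩ := h
  refine isTreeBased_iff.2 ⟨_, r, (isSupportTree_singleton hry).insert_leaf ?_ ?_⟩
  · simp [verts]
  · simp [verts, hrx.symm, hxy]

lemma IsDirBinNet.of_expansion {E E' : Finset (A × A)} (hE : IsDirBinNet E)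
    (hsub : verts E' ⊆ verts E) (hnew : ∀ z ∈ verts E, z ∉ verts E' → ideg E z ≠ 0)
    (hideg : ∀ z ∈ verts E', ideg E' z = ideg E z) (hodeg : ∀ z ∈ verts E', odeg E' z = odeg E z)
    (harc : Arc E' ≤ Relation.TransGen (Arc E)) : IsDirBinNet E' := by
  obtain ⟨hacyc, ⟨r, ⟨hr, hr0⟩, hruniq⟩, hdeg⟩ := hE
  have hr' : r ∈ verts E' := by_contra fun h => hnew r hr h hr0
  refine ⟨fun a ha => hacyc a (Relation.TransGen.closed harc _ _ ha),
    ⟨r, ⟨hr', (hideg r hr').trans hr0⟩, fun z hz => hruniq z ⟨hsub hz.1, (hideg z hz.1) ▸ hz.2⟩⟩,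
    fun z hz => ?_⟩
  rw [hideg z hz, hodeg z hz]
  exact hdeg z (hsub hz)

def addCherry (E : Finset (A × A)) (g x p y : A) : Finset (A × A) :=
  insert (p, y) (subdivide E g x p)

def addRetCherry (E : Finset (A × A)) (g y u w x v : A) : Finset (A × A) :=
  insert (u, v) (subdivide (subdivide E g y u) w x v)

section AddCherry

variable {E : Finset (A × A)} {g x p y z : A}

lemma mem_verts_addCherry (hgx : (g, x) ∈ E) :
    z ∈ verts (addCherry E g x p y) ↔ z = p ∨ z = y ∨ z ∈ verts E := by
  simp only [addCherry, verts_insert, verts_subdivide hgx, Finset.mem_insert]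
  tauto

lemma ideg_addCherry (hgx : (g, x) ∈ E) (hp : p ∉ verts E) (hy : y ∉ verts E) (hz : z ∈ verts E) :
    ideg (addCherry E g x p y) z = ideg E z := by
  rw [addCherry, ideg_insert_of_ne (ne_of_mem_of_not_mem hz hy).symm,
    ideg_subdivide_of_ne hgx hp (ne_of_mem_of_not_mem hz hp)]

lemma odeg_addCherry (hgx : (g, x) ∈ E) (hp : p ∉ verts E) (hz : z ∈ verts E) :
    odeg (addCherry E g x p y) z = odeg E z := by
  rw [addCherry, odeg_insert_of_ne (ne_of_mem_of_not_mem hz hp).symm,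
    odeg_subdivide_of_ne hgx hp (ne_of_mem_of_not_mem hz hp)]

lemma isLeafV_addCherry_iff (hgx : (g, x) ∈ E) (hp : p ∉ verts E) (hy : y ∉ verts E)
    (hz : z ∈ verts E) : IsLeafV (addCherry E g x p y) z ↔ IsLeafV E z := by
  simp only [IsLeafV, ideg_addCherry hgx hp hy hz, odeg_addCherry hgx hp hz, hz,
    (mem_verts_addCherry hgx).2 (.inr (.inr hz))]

lemma IsDirBinNet.of_addCherry (hE : IsDirBinNet (addCherry E g x p y)) (hgx : (g, x) ∈ E)
    (hp : p ∉ verts E) (hy : y ∉ verts E) (hyp : y ≠ p) : IsDirBinNet E := by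
  refine hE.of_expansion (fun z hz => (mem_verts_addCherry hgx).2 (.inr (.inr hz))) ?_
    (fun z hz => (ideg_addCherry hgx hp hy hz).symm) (fun z hz => (odeg_addCherry hgx hp hz).symm)
    (fun _ _ h => Relation.TransGen.mono (fun _ _ h => Finset.mem_insert_of_mem h) _ _
      h.transGen_subdivide)
  intro z hz hzE
  rcases (mem_verts_addCherry hgx).1 hz with rfl | rfl | hz
  · rw [addCherry, ideg_insert_of_ne hyp, ideg_subdivide_self hgx hp]
    exact one_ne_zero
  · exact ideg_ne_zero (Finset.mem_insert_self _ _)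
  · exact absurd hz hzE

lemma IsTreeBased.addCherry (hT : IsTreeBased E) (hgx : (g, x) ∈ E) (hp : p ∉ verts E)
    (hy : y ∉ verts E) (hyp : y ≠ p) (hx : IsLeafV E x) : IsTreeBased (addCherry E g x p y) := by
  obtain ⟨S, r, hS⟩ := isTreeBased_iff.1 hT
  refine isTreeBased_iff.2 ⟨_, r, (hS.subdivide (hS.mem_of_isLeafV hgx hx) hp).insert_leaf ?_ ?_⟩
  · exact verts_subdivide hgx ▸ Finset.mem_insert_self _ _
  · exact notMem_verts_subdivide hgx hy hyp

end AddCherry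

section AddRetCherry

variable {E : Finset (A × A)} {g y u w x v z : A}

lemma mem_verts_addRetCherry (hgy : (g, y) ∈ E) (hwx : (w, x) ∈ E) (hxy : x ≠ y) :
    z ∈ verts (addRetCherry E g y u w x v) ↔ z = u ∨ z = v ∨ z ∈ verts E := by
  have hwx' : (w, x) ∈ subdivide E g y u := mem_subdivide_of_ne hwx (by simp [hxy])
  simp only [addRetCherry, verts_insert, verts_subdivide hwx', verts_subdivide hgy,
    Finset.mem_insert]
  tauto

lemma ideg_addRetCherry (hgy : (g, y) ∈ E) (hwx : (w, x) ∈ E) (hxy : x ≠ y) (hu : u ∉ verts E)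
    (hv : v ∉ verts E) (huv : u ≠ v) (hz : z ∈ verts E) :
    ideg (addRetCherry E g y u w x v) z = ideg E z := by
  have hwx' : (w, x) ∈ subdivide E g y u := mem_subdivide_of_ne hwx (by simp [hxy])
  rw [addRetCherry, ideg_insert_of_ne (ne_of_mem_of_not_mem hz hv).symm,
    ideg_subdivide_of_ne hwx' (notMem_verts_subdivide hgy hv huv.symm) (ne_of_mem_of_not_mem hz hv),
    ideg_subdivide_of_ne hgy hu (ne_of_mem_of_not_mem hz hu)]

lemma odeg_addRetCherry (hgy : (g, y) ∈ E) (hwx : (w, x) ∈ E) (hxy : x ≠ y) (hu : u ∉ verts E)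
    (hv : v ∉ verts E) (huv : u ≠ v) (hz : z ∈ verts E) :
    odeg (addRetCherry E g y u w x v) z = odeg E z := by
  have hwx' : (w, x) ∈ subdivide E g y u := mem_subdivide_of_ne hwx (by simp [hxy])
  rw [addRetCherry, odeg_insert_of_ne (ne_of_mem_of_not_mem hz hu).symm,
    odeg_subdivide_of_ne hwx' (notMem_verts_subdivide hgy hv huv.symm) (ne_of_mem_of_not_mem hz hv),
    odeg_subdivide_of_ne hgy hu (ne_of_mem_of_not_mem hz hu)]

lemma isLeafV_addRetCherry_iff (hgy : (g, y) ∈ E) (hwx : (w, x) ∈ E) (hxy : x ≠ y)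
    (hu : u ∉ verts E) (hv : v ∉ verts E) (huv : u ≠ v) (hz : z ∈ verts E) :
    IsLeafV (addRetCherry E g y u w x v) z ↔ IsLeafV E z := by
  simp only [IsLeafV, ideg_addRetCherry hgy hwx hxy hu hv huv hz,
    odeg_addRetCherry hgy hwx hxy hu hv huv hz, hz,
    (mem_verts_addRetCherry hgy hwx hxy).2 (.inr (.inr hz))]

lemma IsDirBinNet.of_addRetCherry (hE : IsDirBinNet (addRetCherry E g y u w x v))
    (hgy : (g, y) ∈ E) (hwx : (w, x) ∈ E) (hxy : x ≠ y) (hu : u ∉ verts E) (hv : v ∉ verts E)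
    (huv : u ≠ v) : IsDirBinNet E := by
  have hwx' : (w, x) ∈ subdivide E g y u := mem_subdivide_of_ne hwx (by simp [hxy])
  refine hE.of_expansion (fun z hz => (mem_verts_addRetCherry hgy hwx hxy).2 (.inr (.inr hz))) ?_
    (fun z hz => (ideg_addRetCherry hgy hwx hxy hu hv huv hz).symm)
    (fun z hz => (odeg_addRetCherry hgy hwx hxy hu hv huv hz).symm)
    (fun _ _ h => Relation.TransGen.mono (fun _ _ h => Finset.mem_insert_of_mem h) _ _
      (Relation.TransGen.closed (fun _ _ h => h.transGen_subdivide) _ _ h.transGen_subdivide))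
  intro z hz hzE
  rcases (mem_verts_addRetCherry hgy hwx hxy).1 hz with rfl | rfl | hz
  · rw [addRetCherry, ideg_insert_of_ne huv.symm,
      ideg_subdivide_of_ne hwx' (notMem_verts_subdivide hgy hv huv.symm) huv,
      ideg_subdivide_self hgy hu]
    exact one_ne_zero
  · exact ideg_ne_zero (Finset.mem_insert_self _ _)
  · exact absurd hz hzE

lemma IsTreeBased.addRetCherry (hT : IsTreeBased E) (hgy : (g, y) ∈ E) (hwx : (w, x) ∈ E)
    (hxy : x ≠ y) (hu : u ∉ verts E) (hv : v ∉ verts E) (huv : u ≠ v) (hy : IsLeafV E y)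
    (hx : IsLeafV E x) : IsTreeBased (addRetCherry E g y u w x v) := by
  have hwx' : (w, x) ∈ subdivide E g y u := mem_subdivide_of_ne hwx (by simp [hxy])
  obtain ⟨S, r, hS⟩ := isTreeBased_iff.1 hT
  have hS₁ := hS.subdivide (hS.mem_of_isLeafV hgy hy) hu
  have hS₂ := hS₁.subdivide (mem_subdivide_of_ne (hS.mem_of_isLeafV hwx hx) (by simp [hxy]))
    (notMem_verts_subdivide hgy hv huv.symm)
  refine isTreeBased_iff.2 ⟨_, r, hS₂.insert_arc (a := y) ?_ ?_⟩
  · exact mem_subdivide_of_ne (mem_subdivide.2 (.inr (.inl rfl))) (by simp [hxy.symm])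
  · exact verts_subdivide hwx' ▸ Finset.mem_insert_self _ _

end AddRetCherry

lemma PickCherry.exists_eq_addCherry {E E' : Finset (A × A)} (hE : IsDirBinNet E)
    (h : PickCherry E E') : ∃ g x p y, E = addCherry E' g x p y ∧ (g, x) ∈ E' ∧
      p ∉ verts E' ∧ y ∉ verts E' ∧ y ≠ p ∧ IsLeafV E' x := by
  obtain ⟨x, y, p, g, hxy, hxleaf, ⟨-, hyi, hyo⟩, hpx, hpy, hgp, hE'⟩ := h
  have ⟨_, hxi, hxo⟩ := hxleaf
  obtain ⟨hacyc, -, hdeg⟩ := hE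
  have hp : ideg E p = 1 ∧ odeg E p = 2 := by
    have := hdeg p (mem_verts_of_mem_left hpx)
    have := ideg_ne_zero hgp
    have := one_lt_odeg hxy hpx hpy
    omega
  have hparent_x : ∀ c, (c, x) ∈ E → c = p := fun c hc => eq_of_ideg_eq_one hxi hpx hc
  have hparent_y : ∀ c, (c, y) ∈ E → c = p := fun c hc => eq_of_ideg_eq_one hyi hpy hc
  have hparent_p : ∀ c, (c, p) ∈ E → c = g := fun c hc => eq_of_ideg_eq_one hp.1 hgp hc
  have hchild_p : ∀ c, (p, c) ∈ E → c = x ∨ c = y := fun c hc =>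
    eq_or_eq_of_odeg_eq_two hp.2 hxy hpx hpy hc
  have hx : ∀ c, (x, c) ∉ E := odeg_eq_zero_iff.1 hxo
  have hy : ∀ c, (y, c) ∉ E := odeg_eq_zero_iff.1 hyo
  have hgp' : g ≠ p := by
    rintro rfl
    exact hacyc g (.single hgp)
  have hgx : (g, x) ∈ E' := by simp [hE']
  have hp' : p ∉ verts E' := by
    simp only [hE', mem_verts, Finset.mem_insert, Finset.mem_erase, Prod.mk.injEq, ne_eq]
    grind
  have hy' : y ∉ verts E' := by
    simp only [hE', mem_verts, Finset.mem_insert, Finset.mem_erase, Prod.mk.injEq, ne_eq]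
    grind
  have hEq : E = addCherry E' g x p y := by
    ext ⟨a, b⟩
    simp only [hE', addCherry, mem_subdivide, Finset.mem_insert, Finset.mem_erase,
      Prod.mk.injEq, ne_eq]
    grind
  refine ⟨g, x, p, y, hEq, hgx, hp', hy', fun h => hy x (h ▸ hpx), ?_⟩
  exact (isLeafV_addCherry_iff hgx hp' hy' (mem_verts_of_mem_right hgx)).1 (hEq ▸ hxleaf)

lemma PickRetCherry.exists_eq_addRetCherry {E E' : Finset (A × A)} (hE : IsDirBinNet E)
    (h : PickRetCherry E E') : ∃ g y u w x v, E = addRetCherry E' g y u w x v ∧ (g, y) ∈ E' ∧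
      (w, x) ∈ E' ∧ x ≠ y ∧ u ∉ verts E' ∧ v ∉ verts E' ∧ u ≠ v ∧
      IsLeafV E' y ∧ IsLeafV E' x := by
  obtain ⟨x, y, u, v, g, w, hxleaf, hyleaf, hvx, huy, huv, hwv, hwu, hgu, hvi, hvo, hui, huo,
    hE'⟩ := h
  have ⟨_, hxi, hxo⟩ := hxleaf
  have ⟨_, hyi, hyo⟩ := hyleaf
  have hloop : ∀ a, (a, a) ∉ E := fun a ha => hE.1 a (.single ha)
  have hparent_x : ∀ c, (c, x) ∈ E → c = v := fun c hc => eq_of_ideg_eq_one hxi hvx hc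
  have hparent_y : ∀ c, (c, y) ∈ E → c = u := fun c hc => eq_of_ideg_eq_one hyi huy hc
  have hparent_u : ∀ c, (c, u) ∈ E → c = g := fun c hc => eq_of_ideg_eq_one hui hgu hc
  have hparent_v : ∀ c, (c, v) ∈ E → c = u ∨ c = w := fun c hc =>
    eq_or_eq_of_ideg_eq_two hvi hwu.symm huv hwv hc
  have hchild_v : ∀ c, (v, c) ∈ E → c = x := fun c hc => eq_of_odeg_eq_one hvo hvx hc
  have hx : ∀ c, (x, c) ∉ E := odeg_eq_zero_iff.1 hxo
  have hy : ∀ c, (y, c) ∉ E := odeg_eq_zero_iff.1 hyo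
  have hxy : x ≠ y := by
    rintro rfl
    obtain rfl := hparent_x u huy
    exact hloop u huv
  have hchild_u : ∀ c, (u, c) ∈ E → c = v ∨ c = y := fun c hc =>
    eq_or_eq_of_odeg_eq_two huo (fun h => hy x (h ▸ hvx)) huv huy hc
  have huv' : u ≠ v := fun h => hloop u (h ▸ huv)
  have hgy : (g, y) ∈ E' := by simp [hE']
  have hwx : (w, x) ∈ E' := by simp [hE']
  have hu' : u ∉ verts E' := by
    simp only [hE', mem_verts, Finset.mem_insert, Finset.mem_erase, Prod.mk.injEq, ne_eq]
    grind
  have hv' : v ∉ verts E' := by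
    simp only [hE', mem_verts, Finset.mem_insert, Finset.mem_erase, Prod.mk.injEq, ne_eq]
    grind
  have hEq : E = addRetCherry E' g y u w x v := by
    ext ⟨a, b⟩
    simp only [hE', addRetCherry, mem_subdivide, Finset.mem_insert, Finset.mem_erase,
      Prod.mk.injEq, ne_eq]
    grind
  refine ⟨g, y, u, w, x, v, hEq, hgy, hwx, hxy, hu', hv', huv', ?_, ?_⟩
  · exact (isLeafV_addRetCherry_iff hgy hwx hxy hu' hv' huv' (mem_verts_of_mem_right hgy)).1
      (hEq ▸ hyleaf)
  · exact (isLeafV_addRetCherry_iff hgy hwx hxy hu' hv' huv' (mem_verts_of_mem_right hwx)).1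
      (hEq ▸ hxleaf)

section PickStep

variable {E E' : Finset (A × A)}

lemma IsDirBinNet.pickStep (hE : IsDirBinNet E) (h : PickStep E E') : IsDirBinNet E' := by
  rcases h with h | h
  · obtain ⟨g, x, p, y, rfl, hgx, hp, hy, hyp, -⟩ := h.exists_eq_addCherry hE
    exact hE.of_addCherry hgx hp hy hyp
  · obtain ⟨g, y, u, w, x, v, rfl, hgy, hwx, hxy, hu, hv, huv, -⟩ := h.exists_eq_addRetCherry hE
    exact hE.of_addRetCherry hgy hwx hxy hu hv huv

lemma IsTreeBased.of_pickStep (hT : IsTreeBased E') (h : PickStep E E') (hE : IsDirBinNet E) :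
    IsTreeBased E := by
  rcases h with h | h
  · obtain ⟨g, x, p, y, rfl, hgx, hp, hy, hyp, hx⟩ := h.exists_eq_addCherry hE
    exact hT.addCherry hgx hp hy hyp hx
  · obtain ⟨g, y, u, w, x, v, rfl, hgy, hwx, hxy, hu, hv, huv, hy, hx⟩ :=
      h.exists_eq_addRetCherry hE
    exact hT.addRetCherry hgy hwx hxy hu hv huv hy hx

end PickStep

/-- Every binary orchard network is tree-based. -/
theorem orchard_is_tree_based (E : Finset (A × A)) (hnet : IsDirBinNet E)
    (horch : IsOrchard E) : IsTreeBased E := by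
  obtain ⟨F, hEF, hF⟩ := horch
  induction hEF using Relation.ReflTransGen.head_induction_on with
  | refl => exact hF.isTreeBased
  | head hstep _ ih => exact (ih (hnet.pickStep hstep)).of_pickStep hstep hnet
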